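/- Suppose trajectories p_H, p_R : ℝ → ℝ³ satisfy ẍ_H = ẍ_R = 0 identically and the force balance 0 = -B_H ṗ_H + f_c, 0 = B_A(ṗ_H - ṗ_R) - f_c + γ, together with ḟ_c = 0, where f_c is the taut unilateral cable force of p_R - p_H. Then ṗ_H = ṗ_R = B_H^{-1}γ and f_c = γ. -/

import Mathlib

/-!
Since `ḟ_c = 0` the cable force is constant. On the taut region the cable force determines the
cable vector `d = p_R - p_H`: its length is `k (‖d‖ - L)`, strictly increasing in `‖d‖`, and its
direction is that of `d`. Hence `p_R - p_H` is constant, so `ṗ_H = ṗ_R`; the second balance then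
reads `f_c = γ`, and the first gives `B_H ṗ_H = γ`.
-/

open Matrix

section CableForce

variable {ι : Type*} [Fintype ι]

noncomputable def cableForce (k L : ℝ) (d : ι → ℝ) : ι → ℝ :=
  (k * (√(d ⬝ᵥ d) - L) / √(d ⬝ᵥ d)) • d

variable {k L : ℝ} {d : ι → ℝ}

theorem sqrt_dotProduct_cableForce (hk : 0 ≤ k) (hL : 0 ≤ L) (hd : L < √(d ⬝ᵥ d)) :
    √(cableForce k L d ⬝ᵥ cableForce k L d) = k * (√(d ⬝ᵥ d) - L) := by
  have hdd : d ⬝ᵥ d = √(d ⬝ᵥ d) * √(d ⬝ᵥ d) :=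
    (Real.mul_self_sqrt (Finset.sum_nonneg fun i _ => mul_self_nonneg (d i))).symm
  rw [cableForce, smul_dotProduct, dotProduct_smul, smul_eq_mul, smul_eq_mul]
  set s := √(d ⬝ᵥ d)
  have hs : s ≠ 0 := (hL.trans_lt hd).ne'
  rw [hdd, show k * (s - L) / s * (k * (s - L) / s * (s * s)) = k * (s - L) * (k * (s - L)) by
    field_simp]
  exact Real.sqrt_mul_self (mul_nonneg hk (sub_nonneg.mpr hd.le))

theorem cableForce_injOn (hk : 0 < k) (hL : 0 ≤ L) :
    Set.InjOn (cableForce k L) {d : ι → ℝ | L < √(d ⬝ᵥ d)} := by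
  intro d₁ h₁ d₂ h₂ heq
  have hlen : √(d₁ ⬝ᵥ d₁) = √(d₂ ⬝ᵥ d₂) := by
    have := congrArg (fun f => √(f ⬝ᵥ f)) heq
    simp only [sqrt_dotProduct_cableForce hk.le hL h₁, sqrt_dotProduct_cableForce hk.le hL h₂] at this
    linarith [mul_left_cancel₀ hk.ne' this]
  have hcoef : k * (√(d₂ ⬝ᵥ d₂) - L) / √(d₂ ⬝ᵥ d₂) ≠ 0 :=
    (div_pos (mul_pos hk (sub_pos.mpr h₂)) (hL.trans_lt h₂)).ne'
  rw [cableForce, cableForce, hlen] at heq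
  exact smul_right_injective _ hcoef heq

end CableForce

theorem eq_of_hasDerivAt_of_sub_eq_const {E : Type*} [NormedAddCommGroup E] [NormedSpace ℝ E]
    {p q : ℝ → E} {v w c : E} {t : ℝ} (hp : HasDerivAt p v t) (hq : HasDerivAt q w t)
    (hc : ∀ s, p s - q s = c) : v = w := by
  have hsub : HasDerivAt (fun s => p s - q s) (v - w) t := hp.sub hq
  rw [funext hc] at hsub
  exact sub_eq_zero.mp (hsub.unique (hasDerivAt_const t c))

theorem stmt15_general (k L : ℝ) (hk : 0 < k) (hL : 0 < L)
    (BH BA : Matrix (Fin 3) (Fin 3) ℝ)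
    (hBH : BH.PosDef)
    (γ : Fin 3 → ℝ)
    (pH pR vH vR fc : ℝ → Fin 3 → ℝ)
    (hfc : ∀ t, fc t =
      (k * (Real.sqrt ((pR t - pH t) ⬝ᵥ (pR t - pH t)) - L) /
        Real.sqrt ((pR t - pH t) ⬝ᵥ (pR t - pH t))) • (pR t - pH t))
    (htaut : ∀ t, L < Real.sqrt ((pR t - pH t) ⬝ᵥ (pR t - pH t)))
    (hpH : ∀ t, HasDerivAt pH (vH t) t)
    (hpR : ∀ t, HasDerivAt pR (vR t) t)
    (hbalH : ∀ t, 0 = -(BH *ᵥ vH t) + fc t)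
    (hbalR : ∀ t, 0 = BA *ᵥ (vH t - vR t) - fc t + γ)
    (hdfc : ∀ t, HasDerivAt fc 0 t) :
    ∀ t, vH t = BH⁻¹ *ᵥ γ ∧ vR t = BH⁻¹ *ᵥ γ ∧ fc t = γ := by
  intro t
  have hfc_const : ∀ s, fc s = fc 0 := fun s =>
    is_const_of_deriv_eq_zero (fun x => (hdfc x).differentiableAt) (fun x => (hdfc x).deriv) s 0
  have hgap_const : ∀ s, pR s - pH s = pR 0 - pH 0 := fun s =>
    cableForce_injOn hk hL.le (htaut s) (htaut 0) <| by
      simp only [cableForce, ← hfc, hfc_const s]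
  have hv : vR t = vH t := eq_of_hasDerivAt_of_sub_eq_const (hpR t) (hpH t) hgap_const
  have hfcγ : fc t = γ := by
    have h := hbalR t
    rw [hv, sub_self, mulVec_zero, zero_sub] at h
    exact neg_add_eq_zero.mp h.symm
  have hvH : vH t = BH⁻¹ *ᵥ γ := by
    have hBv : BH *ᵥ vH t = γ := by
      rw [← hfcγ]
      exact neg_add_eq_zero.mp (hbalH t).symm
    rw [← hBv, mulVec_mulVec, nonsing_inv_mul _ hBH.det_pos.ne'.isUnit, one_mulVec]
  exact ⟨hvH, hv ▸ hvH, hfcγ⟩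

/-- Equilibrium characterization for the human-velocity-feedback controller
under saturated constant input: if accelerations vanish identically, the force
balances `0 = -B_H ṗ_H + f_c` and `0 = B_A(ṗ_H - ṗ_R) - f_c + γ` hold, the
cable stays taut, and `ḟ_c = 0`, then `ṗ_H = ṗ_R = B_H⁻¹γ` and `f_c = γ`. -/
theorem stmt15 (k L : ℝ) (hk : 0 < k) (hL : 0 < L)
    (BH BA : Matrix (Fin 3) (Fin 3) ℝ)
    (hBHs : BH.IsSymm) (hBAs : BA.IsSymm) (hBH : BH.PosDef) (hBA : BA.PosDef)
    (γ : Fin 3 → ℝ) (hγz : γ 2 = 0)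
    (pH pR vH vR fc : ℝ → Fin 3 → ℝ)
    (hfc : ∀ t, fc t =
      (k * (Real.sqrt ((pR t - pH t) ⬝ᵥ (pR t - pH t)) - L) /
        Real.sqrt ((pR t - pH t) ⬝ᵥ (pR t - pH t))) • (pR t - pH t))
    (htaut : ∀ t, L < Real.sqrt ((pR t - pH t) ⬝ᵥ (pR t - pH t)))
    (hpH : ∀ t, HasDerivAt pH (vH t) t)
    (hpR : ∀ t, HasDerivAt pR (vR t) t)
    (haccH : ∀ t, HasDerivAt vH 0 t)
    (haccR : ∀ t, HasDerivAt vR 0 t)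
    (hbalH : ∀ t, 0 = -(BH *ᵥ vH t) + fc t)
    (hbalR : ∀ t, 0 = BA *ᵥ (vH t - vR t) - fc t + γ)
    (hdfc : ∀ t, HasDerivAt fc 0 t) :
    ∀ t, vH t = BH⁻¹ *ᵥ γ ∧ vR t = BH⁻¹ *ᵥ γ ∧ fc t = γ :=
  stmt15_general k L hk hL BH BA hBH γ pH pR vH vR fc hfc htaut hpH hpR hbalH hbalR hdfc
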